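/- Let g, h : 2^E → ℝ≥0 be monotone with g(∅) = h(∅) = 0, with generic submodularity ratio at least γ ∈ (0,1] and curvature at most c ∈ (0,1], and consider any double-greedy run for g and h. Then for every S ⊆ E with k := |S|, (1/c)·(1 − e^{−c})·γ·h(S) ≤ Σ_{i=1}^{k} φ_i. -/

import Mathlib

/-!
Fix `S` with `k = |S|` and, for `i < k`, let `m_i` count the elements of `S` among the first `i`
processed ones. Curvature bounds `h S + h H_i - h (S ∪ H_i)` by the `h`-gains of the steps that
went to `H`, weighted by `1` on elements of `S` and by `c` otherwise; the submodularity ratio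
bounds `γ (h (S ∪ H_i) - h H_i)` by the `φ_j` of the elements of `S` that went to `G`, plus
`(k - m_i) φ_i` for the unprocessed ones by greediness. Hence
`γ h S ≤ ∑_{j<i} w_j φ_j + (k - m_i) φ_i` with weights `w_j ∈ {1, c}`.

These `k` inequalities alone force `∑_{j<k} φ_j ≥ r(k, k) γ h S` for
`r(n, D) = (1/D) ∑_{j<n} (1 - c/D)^j`: peel off the first step and induct, a weight-`1` step
replacing `D` by `D - 1`, which is harmless because `(1 - c/D)^(j+1) ≤ (1 - c/(D-1))^j`.
Finally `r(k, k) = (1 - (1 - c/k)^k) / c ≥ (1 - e^{-c}) / c`.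
-/

namespace IncDec

open Finset

variable {α : Type*} [Fintype α] [DecidableEq α]

/-- Marginal gain `F(x | S) = F(S ∪ {x}) - F(S)`. -/
def marg (F : Finset α → ℝ) (x : α) (S : Finset α) : ℝ := F (insert x S) - F S

/-- Marginal gain of a set: `F(T | S) = F(T ∪ S) - F(S)`. -/
def margSet (F : Finset α → ℝ) (T S : Finset α) : ℝ := F (T ∪ S) - F S

/-- Monotone set function. -/
def Mono (F : Finset α → ℝ) : Prop := ∀ ⦃S T : Finset α⦄, S ⊆ T → F S ≤ F T

/-- Nonnegative set function. -/
def Nonneg (F : Finset α → ℝ) : Prop := ∀ S : Finset α, 0 ≤ F S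

/-- The combined objective `f(S) = h(S) + g(E \ S)`. -/
def fObj (g h : Finset α → ℝ) (S : Finset α) : ℝ := h S + g Sᶜ

/-- `F` has generic submodularity ratio at least `γ`. -/
def GenSubRatioGE (F : Finset α → ℝ) (γ : ℝ) : Prop :=
  ∀ A B : Finset α, ∀ e : α, marg F e A ≥ γ * marg F e (A ∪ B)

/-- `F` has curvature at most `c`. -/
def CurvatureLE (F : Finset α → ℝ) (c : ℝ) : Prop :=
  ∀ A B : Finset α, ∀ e : α, e ∉ B → marg F e (A ∪ B) ≥ (1 - c) * marg F e A

/-- Submodular set function. -/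
def Submodular (F : Finset α → ℝ) : Prop :=
  ∀ ⦃S T : Finset α⦄, S ⊆ T → ∀ e : α, e ∉ T → marg F e T ≤ marg F e S

/-- Modular set function. -/
def Modular (F : Finset α → ℝ) : Prop := ∀ S : Finset α, F S = ∑ e ∈ S, F {e}

/-- Gross substitute set function. -/
def GrossSubstitute (F : Finset α → ℝ) : Prop :=
  Submodular F ∧
    ∀ A B : Finset α, Disjoint A B → 2 ≤ B.card → ∀ b ∈ B,
      ∃ b' ∈ B.erase b,
        marg F b A + margSet F (B.erase b) A ≤ marg F b' A + margSet F (B.erase b') A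

/-- The set of ratios appearing in the definition of the curvature. -/
def curvRatioSet (F : Finset α → ℝ) : Set ℝ :=
  {r | ∃ A B : Finset α, ∃ e : α, e ∉ B ∧ 0 < marg F e A ∧ r = marg F e (A ∪ B) / marg F e A}

/-- `F` has curvature exactly `c` (with `min ∅ := 1`, i.e. `c = 0` if the ratio set is empty). -/
def CurvatureEq (F : Finset α → ℝ) (c : ℝ) : Prop :=
  (¬ (curvRatioSet F).Nonempty ∧ c = 0) ∨ IsLeast (curvRatioSet F) (1 - c)

/-- The set of ratios appearing in the definition of the generic submodularity ratio. -/
def gsRatioSet (F : Finset α → ℝ) : Set ℝ :=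
  {r | ∃ A B : Finset α, ∃ e : α, 0 < marg F e (A ∪ B) ∧ r = marg F e A / marg F e (A ∪ B)}

/-- `F` has generic submodularity ratio exactly `γ` (with `min ∅ := 1`). -/
def GenSubRatioEq (F : Finset α → ℝ) (γ : ℝ) : Prop :=
  (¬ (gsRatioSet F).Nonempty ∧ γ = 1) ∨ IsLeast (gsRatioSet F) γ

/-- The singleton-based ratio set `{F(e | E \ {e}) / F({e}) : e ∈ E, F({e}) > 0}`. -/
def curvSingletonSet (F : Finset α → ℝ) : Set ℝ :=
  {r | ∃ e : α, 0 < F {e} ∧ r = marg F e ({e}ᶜ) / F {e}}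

/-- A run of the double-greedy algorithm for `g` and `h`: distinct elements `elt 0, …,
`elt (n-1)` enumerating `E` (`elt i` is the element `e*_{i+1}` of the paper), together with the
sets `H i`, `G i` (for `0 ≤ i ≤ n`), each new element maximizing the larger marginal gain and
being added to the side realizing it. -/
structure DGRun (α : Type*) [Fintype α] [DecidableEq α] (g h : Finset α → ℝ) where
  elt : ℕ → α
  H : ℕ → Finset α
  G : ℕ → Finset α
  H0 : H 0 = ∅
  G0 : G 0 = ∅
  mem : ∀ i < Fintype.card α, elt i ∉ H i ∪ G i
  distinct : ∀ i < Fintype.card α, ∀ j < Fintype.card α, elt i = elt j → i = j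
  enum : ∀ x : α, ∃ i < Fintype.card α, elt i = x
  greedy : ∀ i < Fintype.card α, ∀ x : α, x ∉ H i ∪ G i →
      max (marg g x (G i)) (marg h x (H i)) ≤ max (marg g (elt i) (G i)) (marg h (elt i) (H i))
  step : ∀ i < Fintype.card α,
      (H (i + 1) = insert (elt i) (H i) ∧ G (i + 1) = G i ∧
        marg g (elt i) (G i) ≤ marg h (elt i) (H i)) ∨
      (G (i + 1) = insert (elt i) (G i) ∧ H (i + 1) = H i ∧
        marg h (elt i) (H i) ≤ marg g (elt i) (G i))

/-- `phi R i` is the increment `φ_{i+1}` of the double-greedy run `R`. -/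
def phi {g h : Finset α → ℝ} (R : DGRun α g h) (i : ℕ) : ℝ :=
  max (marg g (R.elt i) (R.G i)) (marg h (R.elt i) (R.H i))

section GreedyRatio

variable {c D : ℝ}

noncomputable def greedyRatio (c D : ℝ) (n : ℕ) : ℝ := (∑ j ∈ range n, (1 - c / D) ^ j) / D

lemma greedyRatio_succ (n : ℕ) :
    greedyRatio c D (n + 1) = 1 / D + (1 - c / D) * greedyRatio c D n := by
  rw [greedyRatio, greedyRatio, geom_sum_succ]
  ring

lemma one_sub_div_nonneg (hc1 : c ≤ 1) (hD : 1 ≤ D) : 0 ≤ 1 - c / D :=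
  sub_nonneg.2 ((div_le_one (by linarith)).2 (by linarith))

lemma greedyRatio_nonneg (hc1 : c ≤ 1) (hD : 1 ≤ D) (n : ℕ) : 0 ≤ greedyRatio c D n := by
  have := one_sub_div_nonneg hc1 hD
  unfold greedyRatio
  positivity

lemma greedyRatio_le_one (hc0 : 0 ≤ c) (hc1 : c ≤ 1) {n : ℕ} (hn : n ≤ D) :
    greedyRatio c D n ≤ 1 := by
  rcases n.eq_zero_or_pos with rfl | hn0
  · simp [greedyRatio]
  have hD : 1 ≤ D := le_trans (by exact_mod_cast hn0) hn
  rw [greedyRatio, div_le_one (by linarith)]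
  calc ∑ j ∈ range n, (1 - c / D) ^ j ≤ ∑ j ∈ range n, (1 : ℝ) :=
        sum_le_sum fun j _ => pow_le_one₀ (one_sub_div_nonneg hc1 hD)
          (by linarith [div_nonneg hc0 (by linarith : (0 : ℝ) ≤ D)])
    _ ≤ D := by simpa using hn

lemma one_sub_div_pow_succ_le (hc0 : 0 ≤ c) (hc1 : c ≤ 1) {j : ℕ} (hj : j + 2 ≤ D) :
    (1 - c / D) ^ (j + 1) ≤ (1 - c / (D - 1)) ^ j := by
  have hD : 0 < D - 1 := by linarith [j.cast_nonneg (α := ℝ)]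
  set b := 1 - c / D with hb_def
  set a := 1 - c / (D - 1) with ha_def
  have hb : 0 < b := by
    rw [hb_def, sub_pos, div_lt_one (by linarith)]
    linarith
  have ha : 0 ≤ a := one_sub_div_nonneg hc1 (by linarith [j.cast_nonneg (α := ℝ)])
  have hbern := one_add_mul_le_pow (a := (a - b) / b)
    (by rw [le_div_iff₀ hb]; linarith) j
  have hjb : (j : ℝ) / (D - 1) ≤ b := by
    have hcD : c / D * D = c := div_mul_cancel₀ c (by linarith)
    rw [div_le_iff₀ hD, hb_def]
    nlinarith [div_nonneg hc0 (by linarith : (0 : ℝ) ≤ D)]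
  have hstep : b ≤ 1 + j * ((a - b) / b) := by
    have hab : a - b = -(1 - b) / (D - 1) := by
      have : D ≠ 0 := by linarith
      rw [ha_def, hb_def]
      field_simp
      ring
    have hrw : 1 + j * ((a - b) / b) - b = (b - j / (D - 1)) * (1 - b) / b := by
      rw [hab]
      field_simp
      ring
    have : 0 ≤ (b - j / (D - 1)) * (1 - b) / b := by
      have : 0 ≤ 1 - b := by rw [hb_def]; linarith [div_nonneg hc0 (by linarith : (0 : ℝ) ≤ D)]
      have := sub_nonneg.2 hjb
      positivity
    linarith
  calc b ^ (j + 1) = b ^ j * b := pow_succ b j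
    _ ≤ b ^ j * (1 + j * ((a - b) / b)) := by gcongr
    _ ≤ b ^ j * (1 + (a - b) / b) ^ j := by gcongr
    _ = a ^ j := by
      rw [← mul_pow]
      congr 1
      field_simp
      ring

lemma greedyRatio_le_greedyRatio_sub_one (hc0 : 0 ≤ c) (hc1 : c ≤ 1) {n : ℕ} (hn : n + 1 ≤ D) :
    (1 - c / D) * greedyRatio c D n ≤ (1 - 1 / D) * greedyRatio c (D - 1) n := by
  rcases n.eq_zero_or_pos with rfl | hn0
  · simp [greedyRatio]
  have hD : 2 ≤ D := by
    have : (1 : ℝ) ≤ n := by exact_mod_cast hn0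
    linarith
  have hrw : (1 - 1 / D) * greedyRatio c (D - 1) n =
      (∑ j ∈ range n, (1 - c / (D - 1)) ^ j) / D := by
    have : D ≠ 0 := by linarith
    have : D - 1 ≠ 0 := by linarith
    rw [greedyRatio]
    field_simp
  rw [hrw, greedyRatio, ← mul_div_assoc, mul_sum]
  refine div_le_div_of_nonneg_right (sum_le_sum fun j hj => ?_) (by linarith)
  rw [← pow_succ']
  refine one_sub_div_pow_succ_le hc0 hc1 ?_
  have : (j : ℝ) + 1 ≤ n := by exact_mod_cast mem_range.1 hj
  linarith

lemma greedyRatio_succ_mul_le_of_sub_one (hc0 : 0 ≤ c) (hc1 : c ≤ 1) {n : ℕ} (hn : n + 1 ≤ D)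
    {V φ₀ σ : ℝ} (hV : 0 ≤ V) (hφ₀ : V / D ≤ φ₀)
    (ih : greedyRatio c (D - 1) n * (V - φ₀) ≤ σ) :
    greedyRatio c D (n + 1) * V ≤ σ + φ₀ := by
  have hf := greedyRatio_le_one hc0 hc1 (n := n) (D := D - 1) (by linarith)
  calc greedyRatio c D (n + 1) * V
      ≤ (1 / D + (1 - 1 / D) * greedyRatio c (D - 1) n) * V := by
        rw [greedyRatio_succ]
        gcongr (1 / D + ?_) * V
        exact greedyRatio_le_greedyRatio_sub_one hc0 hc1 hn
    _ = greedyRatio c (D - 1) n * V + (1 - greedyRatio c (D - 1) n) * (V / D) := by ring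
    _ ≤ greedyRatio c (D - 1) n * V + (1 - greedyRatio c (D - 1) n) * φ₀ := by
        have := sub_nonneg.2 hf
        gcongr
    _ ≤ σ + φ₀ := by linarith

lemma greedyRatio_succ_mul_le_of_same (hc0 : 0 ≤ c) (hc1 : c ≤ 1) {n : ℕ} (hn : n + 1 ≤ D)
    {V φ₀ σ : ℝ} (hφ₀ : V / D ≤ φ₀) (ih : greedyRatio c D n * (V - c * φ₀) ≤ σ) :
    greedyRatio c D (n + 1) * V ≤ σ + φ₀ := by
  have hD : 1 ≤ D := by linarith [n.cast_nonneg (α := ℝ)]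
  have hcf : c * greedyRatio c D n ≤ 1 := mul_le_one₀ hc1 (greedyRatio_nonneg hc1 hD n)
    (greedyRatio_le_one hc0 hc1 (by linarith))
  calc greedyRatio c D (n + 1) * V
      = greedyRatio c D n * V + (1 - c * greedyRatio c D n) * (V / D) := by
        rw [greedyRatio_succ]
        ring
    _ ≤ greedyRatio c D n * V + (1 - c * greedyRatio c D n) * φ₀ := by
        have := sub_nonneg.2 hcf
        gcongr
    _ ≤ σ + φ₀ := by linarith

theorem greedyRatio_mul_le_sum (hc0 : 0 ≤ c) (hc1 : c ≤ 1) (p : ℕ → Prop) [DecidablePred p]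
    (φ : ℕ → ℝ) (hφ : ∀ j, 0 ≤ φ j) {n : ℕ} {V : ℝ} (hnD : n ≤ D)
    (hV : ∀ i < n, V ≤ ∑ j ∈ range i, (if p j then 1 else c) * φ j
      + (D - #{j ∈ range i | p j}) * φ i) :
    greedyRatio c D n * V ≤ ∑ j ∈ range n, φ j := by
  induction n generalizing p φ D V with
  | zero => simp [greedyRatio]
  | succ n ih =>
    push_cast at hnD
    have hD : 1 ≤ D := by linarith [n.cast_nonneg (α := ℝ)]
    rcases le_or_gt V 0 with hV0 | hV0
    · exact (mul_nonpos_of_nonneg_of_nonpos (greedyRatio_nonneg hc1 hD _) hV0).trans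
        (sum_nonneg fun j _ => hφ j)
    have hφ₀ : V / D ≤ φ 0 := by
      rw [div_le_iff₀ (by linarith)]
      simpa [mul_comm] using hV 0 n.succ_pos
    have hshift : ∀ i < n, V - (if p 0 then 1 else c) * φ 0 ≤
        ∑ j ∈ range i, (if p (j + 1) then 1 else c) * φ (j + 1)
          + (D - (if p 0 then 1 else 0) - #{j ∈ range i | p (j + 1)}) * φ (i + 1) := by
      intro i hi
      have := hV (i + 1) (by omega)
      rw [sum_range_succ', natCast_card_filter, sum_range_succ'] at this
      rw [natCast_card_filter]
      linarith
    rw [sum_range_succ']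
    by_cases hp : p 0
    · exact greedyRatio_succ_mul_le_of_sub_one hc0 hc1 hnD hV0.le hφ₀
        (ih (fun j => p (j + 1)) (fun j => φ (j + 1)) (fun j => hφ _) (by linarith)
          (by simpa [hp] using hshift))
    · exact greedyRatio_succ_mul_le_of_same hc0 hc1 hnD hφ₀
        (ih (fun j => p (j + 1)) (fun j => φ (j + 1)) (fun j => hφ _) (by linarith)
          (by simpa [hp] using hshift))

lemma one_div_mul_one_sub_exp_le_greedyRatio (hc0 : 0 < c) (hc1 : c ≤ 1) {k : ℕ} (hk : 0 < k) :
    1 / c * (1 - Real.exp (-c)) ≤ greedyRatio c k k := by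
  have hk' : (1 : ℝ) ≤ k := by exact_mod_cast hk
  have hpow := Real.one_sub_div_pow_le_exp_neg (n := k) (t := c) (by linarith)
  have hne : 1 - c / k ≠ 1 := by
    have : 0 < c / k := by positivity
    linarith
  rw [greedyRatio, geom_sum_eq hne, show 1 - c / k - 1 = -(c / k) by ring]
  rw [show ((1 - c / k) ^ k - 1) / -(c / k) / k = 1 / c * (1 - (1 - c / k) ^ k) by
    field_simp
    ring]
  gcongr

theorem one_div_mul_one_sub_exp_mul_le_sum (hc0 : 0 < c) (hc1 : c ≤ 1) (p : ℕ → Prop)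
    [DecidablePred p] (φ : ℕ → ℝ) (hφ : ∀ j, 0 ≤ φ j) {k : ℕ} (hk : 0 < k) {V : ℝ}
    (hV : ∀ i < k, V ≤ ∑ j ∈ range i, (if p j then 1 else c) * φ j
      + (k - #{j ∈ range i | p j}) * φ i) :
    1 / c * (1 - Real.exp (-c)) * V ≤ ∑ j ∈ range k, φ j := by
  rcases le_or_gt V 0 with hV0 | hV0
  · have : 0 ≤ 1 - Real.exp (-c) := by simpa using Real.exp_le_one_iff.2 (neg_nonpos.2 hc0.le)
    exact (mul_nonpos_of_nonneg_of_nonpos (by positivity) hV0).trans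
      (sum_nonneg fun j _ => hφ j)
  · exact (mul_le_mul_of_nonneg_right (one_div_mul_one_sub_exp_le_greedyRatio hc0 hc1 hk)
      hV0.le).trans (greedyRatio_mul_le_sum hc0.le hc1 p φ hφ le_rfl hV)

end GreedyRatio

section SetFunction

variable {F : Finset α → ℝ}

omit [Fintype α] in
lemma marg_nonneg (hF : Mono F) (x : α) (S : Finset α) : 0 ≤ marg F x S :=
  sub_nonneg.2 (hF (subset_insert x S))

omit [Fintype α] in
lemma CurvatureLE.marg_le {c : ℝ} (hF : CurvatureLE F c) (S T : Finset α) (e : α) :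
    marg F e T ≤ marg F e (S ∪ T) + (if e ∈ S then 1 else c) * marg F e T := by
  by_cases he : e ∈ S
  · have : marg F e (S ∪ T) = 0 := by
      rw [marg, insert_eq_of_mem (mem_union_left T he), sub_self]
    simp [he, this]
  · have := hF T S e he
    rw [union_comm] at this
    rw [if_neg he]
    linarith

omit [Fintype α] in
lemma GenSubRatioGE.mul_sub_le_sum {γ : ℝ} (hF : GenSubRatioGE F γ) {T U : Finset α}
    (b : α → ℝ) (hb : ∀ s ∈ T, ∃ A ⊆ U, marg F s A ≤ b s) :
    γ * (F (T ∪ U) - F U) ≤ ∑ s ∈ T, b s := by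
  induction T using Finset.induction_on with
  | empty => simp
  | insert t T ht ih =>
    obtain ⟨A, hAU, hA⟩ := hb t (mem_insert_self t T)
    have hgain : γ * marg F t (T ∪ U) ≤ b t := by
      have := hF A (T ∪ U) t
      rw [union_eq_right.2 (hAU.trans subset_union_right)] at this
      linarith
    have := ih fun s hs => hb s (mem_insert_of_mem hs)
    rw [sum_insert ht, insert_union]
    rw [marg] at hgain
    linarith

end SetFunction

namespace DGRun

variable {g h : Finset α → ℝ} (R : DGRun α g h)

lemma phi_nonneg (hh : Mono h) (i : ℕ) : 0 ≤ phi R i :=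
  (marg_nonneg hh _ _).trans (le_max_right _ _)

lemma marg_le_phi (i : ℕ) : marg h (R.elt i) (R.H i) ≤ phi R i := le_max_right _ _

lemma marg_le_phi_of_notMem {i : ℕ} (hi : i < Fintype.card α) {x : α}
    (hx : x ∉ R.H i ∪ R.G i) : marg h x (R.H i) ≤ phi R i :=
  (le_max_right _ _).trans (R.greedy i hi x hx)

lemma H_subset_succ {i : ℕ} (hi : i < Fintype.card α) : R.H i ⊆ R.H (i + 1) := by
  rcases R.step i hi with ⟨hH, -, -⟩ | ⟨-, hH, -⟩
  · rw [hH]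
    exact subset_insert _ _
  · rw [hH]

lemma H_mono {i j : ℕ} (hij : i ≤ j) (hj : j ≤ Fintype.card α) : R.H i ⊆ R.H j := by
  induction j, hij using Nat.le_induction with
  | base => rfl
  | succ j _ ih => exact (ih (by omega)).trans (R.H_subset_succ (by omega))

lemma H_union_G_succ {i : ℕ} (hi : i < Fintype.card α) :
    R.H (i + 1) ∪ R.G (i + 1) = insert (R.elt i) (R.H i ∪ R.G i) := by
  rcases R.step i hi with ⟨hH, hG, -⟩ | ⟨hG, hH, -⟩
  · rw [hH, hG, insert_union]
  · rw [hH, hG, union_insert]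

noncomputable def index (x : α) : ℕ := Nat.find (R.enum x)

lemma index_lt (x : α) : R.index x < Fintype.card α := (Nat.find_spec (R.enum x)).1

lemma elt_index (x : α) : R.elt (R.index x) = x := (Nat.find_spec (R.enum x)).2

lemma index_elt {j : ℕ} (hj : j < Fintype.card α) : R.index (R.elt j) = j :=
  R.distinct _ (R.index_lt _) _ hj (R.elt_index _)

lemma index_lt_of_mem {i : ℕ} (hi : i ≤ Fintype.card α) {x : α} (hx : x ∈ R.H i ∪ R.G i) :
    R.index x < i := by
  induction i with
  | zero => simp [R.H0, R.G0] at hx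
  | succ i ih =>
    rw [R.H_union_G_succ (by omega), mem_insert] at hx
    rcases hx with rfl | hx
    · rw [R.index_elt (by omega)]
      omega
    · exact (ih (by omega) hx).trans i.lt_succ_self

lemma sum_eq_sum_range {M : Type*} [AddCommMonoid M] (T : Finset α) (f : α → M) :
    ∑ s ∈ T, f s = ∑ j ∈ range (Fintype.card α), if R.elt j ∈ T then f (R.elt j) else 0 := by
  rw [← sum_filter]
  refine sum_nbij' R.index R.elt (fun x hx => ?_) (fun j hj => (mem_filter.1 hj).2)
    (fun x _ => R.elt_index x) (fun j hj => R.index_elt (mem_range.1 (mem_filter.1 hj).1))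
    (fun x _ => by rw [R.elt_index])
  exact mem_filter.2 ⟨mem_range.2 (R.index_lt x), by rwa [R.elt_index]⟩

lemma add_le_add_sum_marg (hhe : h ∅ = 0) {c : ℝ} (hC : CurvatureLE h c) (S : Finset α)
    {i : ℕ} (hi : i ≤ Fintype.card α) :
    h S + h (R.H i) ≤ h (S ∪ R.H i) + ∑ j ∈ range i, if R.elt j ∈ R.H (j + 1) then
      (if R.elt j ∈ S then 1 else c) * marg h (R.elt j) (R.H j) else 0 := by
  induction i with
  | zero => simp [R.H0, hhe]
  | succ i ih =>
    have ih := ih (by omega)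
    rw [sum_range_succ]
    rcases R.step i (by omega) with ⟨hH, -, -⟩ | ⟨-, hH, -⟩
    · have := hC.marg_le S (R.H i) (R.elt i)
      rw [hH, if_pos (mem_insert_self _ _), union_insert]
      have hS : marg h (R.elt i) (S ∪ R.H i) =
          h (insert (R.elt i) (S ∪ R.H i)) - h (S ∪ R.H i) := rfl
      have hH : marg h (R.elt i) (R.H i) = h (insert (R.elt i) (R.H i)) - h (R.H i) := rfl
      linarith
    · have : R.elt i ∉ R.H i := fun hm => R.mem i (by omega) (mem_union_left _ hm)
      rw [hH, if_neg this, add_zero]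
      exact ih

lemma mul_sub_le_sum_phi {γ : ℝ} (hγ : GenSubRatioGE h γ) (S : Finset α) {i : ℕ}
    (hi : i < Fintype.card α) :
    γ * (h (S ∪ R.H i) - h (R.H i)) ≤
      ∑ j ∈ range i, (if R.elt j ∈ S \ R.H i then phi R j else 0) +
        ∑ j ∈ Ico i (Fintype.card α), if R.elt j ∈ S \ R.H i then phi R i else 0 := by
  -- An element processed before step `i` is charged to its own step, a later one to step `i`.
  have hb : ∀ s ∈ S \ R.H i, ∃ A ⊆ R.H i, marg h s A ≤ phi R (min (R.index s) i) := by
    intro s _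
    rcases lt_or_ge (R.index s) i with hlt | hge
    · refine ⟨R.H (R.index s), R.H_mono hlt.le hi.le, ?_⟩
      rw [min_eq_left hlt.le]
      simpa only [R.elt_index] using R.marg_le_phi (R.index s)
    · refine ⟨R.H i, subset_rfl, ?_⟩
      rw [min_eq_right hge]
      exact R.marg_le_phi_of_notMem hi fun hs => (R.index_lt_of_mem hi.le hs).not_ge hge
  have := hγ.mul_sub_le_sum _ hb
  rw [sdiff_union_self_eq_union, R.sum_eq_sum_range, ← sum_range_add_sum_Ico _ hi.le] at this
  convert this using 2 <;> refine sum_congr rfl fun j hj => ?_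
  · rw [R.index_elt ((mem_range.1 hj).trans hi), min_eq_left (mem_range.1 hj).le]
  · rw [R.index_elt (mem_Ico.1 hj).2, min_eq_right (mem_Ico.1 hj).1]

lemma gain_add_le_weight_mul_phi (hh : Mono h) {c γ : ℝ} (hc0 : 0 ≤ c) (hγ0 : 0 ≤ γ)
    (hγ1 : γ ≤ 1) (S : Finset α) {i j : ℕ} (hji : j < i) (hi : i ≤ Fintype.card α) :
    γ * (if R.elt j ∈ R.H (j + 1) then
        (if R.elt j ∈ S then 1 else c) * marg h (R.elt j) (R.H j) else 0) +
      (if R.elt j ∈ S \ R.H i then phi R j else 0) ≤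
      (if R.elt j ∈ S then 1 else c) * phi R j := by
  have hφ := R.phi_nonneg hh j
  have hw : 0 ≤ (if R.elt j ∈ S then 1 else c) := by split_ifs <;> linarith
  by_cases hH : R.elt j ∈ R.H (j + 1)
  · have : R.elt j ∉ S \ R.H i := fun hm => (mem_sdiff.1 hm).2 (R.H_mono hji hi hH)
    rw [if_pos hH, if_neg this, add_zero]
    calc γ * ((if R.elt j ∈ S then 1 else c) * marg h (R.elt j) (R.H j))
        ≤ γ * ((if R.elt j ∈ S then 1 else c) * phi R j) := by
          gcongr
          exact R.marg_le_phi j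
      _ ≤ (if R.elt j ∈ S then 1 else c) * phi R j :=
          mul_le_of_le_one_left (mul_nonneg hw hφ) hγ1
  · rw [if_neg hH, mul_zero, zero_add]
    by_cases hS : R.elt j ∈ S
    · rw [if_pos hS, one_mul]
      split_ifs <;> linarith
    · have : R.elt j ∉ S \ R.H i := fun hm => hS (mem_sdiff.1 hm).1
      rw [if_neg hS, if_neg this]
      exact mul_nonneg hc0 hφ

theorem mul_le_sum_phi_add (hh : Mono h) (hhe : h ∅ = 0) {c γ : ℝ} (hc0 : 0 ≤ c)
    (hγ0 : 0 ≤ γ) (hγ1 : γ ≤ 1) (hC : CurvatureLE h c) (hγ : GenSubRatioGE h γ)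
    (S : Finset α) {i : ℕ} (hi : i < Fintype.card α) :
    γ * h S ≤ ∑ j ∈ range i, (if R.elt j ∈ S then 1 else c) * phi R j +
      (S.card - #{j ∈ range i | R.elt j ∈ S}) * phi R i := by
  have hdef := mul_le_mul_of_nonneg_left (R.add_le_add_sum_marg hhe hC S hi.le) hγ0
  have hgain := R.mul_sub_le_sum_phi hγ S hi
  have hsteps := sum_le_sum fun j hj =>
    R.gain_add_le_weight_mul_phi hh hc0 hγ0 hγ1 S (mem_range.1 hj) hi.le
  rw [sum_add_distrib, ← mul_sum] at hsteps
  have hcard : ((S.card : ℝ) - #{j ∈ range i | R.elt j ∈ S}) =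
      ∑ j ∈ Ico i (Fintype.card α), if R.elt j ∈ S then 1 else 0 := by
    rw [card_eq_sum_ones, Nat.cast_sum, R.sum_eq_sum_range, ← sum_range_add_sum_Ico _ hi.le,
      natCast_card_filter]
    simp
  have hrest : ∑ j ∈ Ico i (Fintype.card α), (if R.elt j ∈ S \ R.H i then phi R i else 0) ≤
      (S.card - #{j ∈ range i | R.elt j ∈ S}) * phi R i := by
    rw [hcard, sum_mul]
    refine sum_le_sum fun j _ => ?_
    split_ifs <;> simp_all [R.phi_nonneg hh i]
  linarith

end DGRun

theorem stmt10_general (g h : Finset α → ℝ) (c γ : ℝ)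
    (hhm : Mono h)
    (hhe : h ∅ = 0)
    (hc0 : 0 < c) (hc1 : c ≤ 1) (hγ0 : 0 < γ) (hγ1 : γ ≤ 1)
    (hhC : CurvatureLE h c)
    (hhγ : GenSubRatioGE h γ)
    (R : DGRun α g h) :
    ∀ S : Finset α,
      (1 / c) * (1 - Real.exp (-c)) * (γ * h S) ≤ ∑ i ∈ Finset.range S.card, phi R i := by
  intro S
  rcases S.eq_empty_or_nonempty with rfl | hS
  · simp [hhe]
  exact one_div_mul_one_sub_exp_mul_le_sum hc0 hc1 (fun j => R.elt j ∈ S) (phi R)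
    (R.phi_nonneg hhm) hS.card_pos fun i hi =>
      R.mul_le_sum_phi_add hhm hhe hc0.le hγ0.le hγ1 hhC hhγ S (hi.trans_le (card_le_univ S))

theorem stmt10 (g h : Finset α → ℝ) (c γ : ℝ)
    (hgm : Mono g) (hhm : Mono h) (hg0 : Nonneg g) (hh0 : Nonneg h)
    (hge : g ∅ = 0) (hhe : h ∅ = 0)
    (hc0 : 0 < c) (hc1 : c ≤ 1) (hγ0 : 0 < γ) (hγ1 : γ ≤ 1)
    (hgC : CurvatureLE g c) (hhC : CurvatureLE h c)
    (hgγ : GenSubRatioGE g γ) (hhγ : GenSubRatioGE h γ)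
    (R : DGRun α g h) :
    ∀ S : Finset α,
      (1 / c) * (1 - Real.exp (-c)) * (γ * h S) ≤ ∑ i ∈ Finset.range S.card, phi R i :=
  stmt10_general g h c γ hhm hhe hc0 hc1 hγ0 hγ1 hhC hhγ R

end IncDec
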